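/- Define, for f, g continuously differentiable 2π-periodic real functions, ⟨f, g⟩ = (1/4π)·∫_{−π}^{π} f′(θ)·g′(θ)/sin(θ/2)² dθ (the integrand extending continuously to θ = 0 for the functions below). Then the family consisting of e_{c,0}(θ) = cos θ − 1 together with e_{s,k}(θ) = sin((k+1)θ)/(k+1) − sin(kθ)/k and e_{c,k}(θ) = (cos((k+1)θ) − 1)/(k+1) − (cos(kθ) − 1)/k for integers k ≥ 1 is orthonormal: ⟨e_{s,k}, e_{s,j}⟩ = δ_{kj} and ⟨e_{c,k}, e_{c,j}⟩ = δ_{kj} for all k, j ≥ 1, ⟨e_{c,0}, e_{c,0}⟩ = 1, ⟨e_{s,k}, e_{c,j}⟩ = 0 for all k ≥ 1 and j ≥ 0, and ⟨e_{c,0}, e_{c,k}⟩ = 0 for all k ≥ 1. -/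

import Mathlib

open intervalIntegral

/-- The basis functions `e_{s,k}` of the weighted Sobolev space `ℋ`. -/
noncomputable def eS (k : ℕ) (θ : ℝ) : ℝ :=
  if k = 0 then Real.sin θ
  else Real.sin (((k : ℝ) + 1) * θ) / ((k : ℝ) + 1) - Real.sin ((k : ℝ) * θ) / k

/-- The basis functions `e_{c,k}` of the weighted Sobolev space `ℋ`. -/
noncomputable def eC (k : ℕ) (θ : ℝ) : ℝ :=
  if k = 0 then Real.cos θ - 1
  else (Real.cos (((k : ℝ) + 1) * θ) - 1) / ((k : ℝ) + 1) - (Real.cos ((k : ℝ) * θ) - 1) / k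

/-- The inner product of the weighted Sobolev space `ℋ`:
`⟨f, g⟩ = (1/4π) ∫_{-π}^{π} f'(θ) g'(θ) / sin(θ/2)² dθ`. -/
noncomputable def Hinner (f g : ℝ → ℝ) : ℝ :=
  (1 / (4 * Real.pi)) *
    ∫ θ in (-Real.pi)..Real.pi, deriv f θ * deriv g θ / Real.sin (θ / 2) ^ 2

open MeasureTheory

/- ## Derivative computations -/

lemma hasDerivAt_sin_mul (c x : ℝ) :
    HasDerivAt (fun t => Real.sin (c * t)) (Real.cos (c * x) * c) x := by
  simpa [Function.comp_def] using (Real.hasDerivAt_sin (c * x)).comp x ((hasDerivAt_id x).const_mul c)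

lemma hasDerivAt_cos_mul (c x : ℝ) :
    HasDerivAt (fun t => Real.cos (c * t)) (-Real.sin (c * x) * c) x := by
  simpa [Function.comp_def] using (Real.hasDerivAt_cos (c * x)).comp x ((hasDerivAt_id x).const_mul c)

lemma deriv_eS (k : ℕ) (hk : k ≠ 0) (θ : ℝ) :
    deriv (eS k) θ = Real.cos (((k : ℝ) + 1) * θ) - Real.cos ((k : ℝ) * θ) := by
  have hk0 : (k : ℝ) ≠ 0 := Nat.cast_ne_zero.mpr hk
  have hk1 : (k : ℝ) + 1 ≠ 0 := by positivity
  have heq : eS k = fun t => Real.sin (((k : ℝ) + 1) * t) / ((k : ℝ) + 1)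
      - Real.sin ((k : ℝ) * t) / (k : ℝ) := by
    funext t; simp [eS, hk]
  have h1 := (hasDerivAt_sin_mul ((k : ℝ) + 1) θ).div_const ((k : ℝ) + 1)
  have h2 := (hasDerivAt_sin_mul (k : ℝ) θ).div_const (k : ℝ)
  have h : HasDerivAt (eS k)
      (Real.cos (((k : ℝ) + 1) * θ) * ((k : ℝ) + 1) / ((k : ℝ) + 1)
        - Real.cos ((k : ℝ) * θ) * (k : ℝ) / (k : ℝ)) θ := by
    rw [heq]; exact h1.sub h2
  rw [h.deriv]; field_simp

lemma deriv_eC (k : ℕ) (hk : k ≠ 0) (θ : ℝ) :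
    deriv (eC k) θ = -(Real.sin (((k : ℝ) + 1) * θ) - Real.sin ((k : ℝ) * θ)) := by
  have hk0 : (k : ℝ) ≠ 0 := Nat.cast_ne_zero.mpr hk
  have hk1 : (k : ℝ) + 1 ≠ 0 := by positivity
  have heq : eC k = fun t => (Real.cos (((k : ℝ) + 1) * t) - 1) / ((k : ℝ) + 1)
      - (Real.cos ((k : ℝ) * t) - 1) / (k : ℝ) := by
    funext t; simp [eC, hk]
  have h1 := (((hasDerivAt_cos_mul ((k : ℝ) + 1) θ)).sub_const 1).div_const ((k : ℝ) + 1)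
  have h2 := (((hasDerivAt_cos_mul (k : ℝ) θ)).sub_const 1).div_const (k : ℝ)
  have h : HasDerivAt (eC k)
      (-Real.sin (((k : ℝ) + 1) * θ) * ((k : ℝ) + 1) / ((k : ℝ) + 1)
        - -Real.sin ((k : ℝ) * θ) * (k : ℝ) / (k : ℝ)) θ := by
    rw [heq]; exact h1.sub h2
  rw [h.deriv]; field_simp; ring

lemma deriv_eC0 (θ : ℝ) : deriv (eC 0) θ = -Real.sin θ := by
  have heq : eC 0 = fun t => Real.cos t - 1 := by funext t; simp [eC]
  have h : HasDerivAt (eC 0) (-Real.sin θ) θ := by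
    rw [heq]; exact (Real.hasDerivAt_cos θ).sub_const 1
  exact h.deriv

/- ## Integral computations -/

lemma ae_ne_zero : ∀ᵐ θ : ℝ, θ ≠ 0 := by
  refine MeasureTheory.ae_iff.mpr ?_
  simp only [ne_eq, not_not, Set.setOf_eq_eq_singleton]
  exact measure_singleton 0

lemma sin_half_ne (θ : ℝ) (hθ : θ ∈ Set.Ioc (-Real.pi) Real.pi) (h0 : θ ≠ 0) :
    Real.sin (θ / 2) ≠ 0 := by
  intro h
  have hpi := Real.pi_pos
  have h1 : -Real.pi < θ / 2 := by have := hθ.1; linarith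
  have h2 : θ / 2 < Real.pi := by have := hθ.2; linarith
  exact h0 (by linarith [(Real.sin_eq_zero_iff_of_lt_of_lt h1 h2).mp h])

lemma Hinner_congr (f g F : ℝ → ℝ)
    (h : ∀ θ, θ ∈ Set.Ioc (-Real.pi) Real.pi → θ ≠ 0 →
      deriv f θ * deriv g θ / Real.sin (θ / 2) ^ 2 = F θ) :
    Hinner f g = (1 / (4 * Real.pi)) * ∫ θ in (-Real.pi)..Real.pi, F θ := by
  unfold Hinner
  congr 1
  apply intervalIntegral.integral_congr_ae
  filter_upwards [ae_ne_zero] with θ h0 hmem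
  rw [Set.uIoc_of_le (by linarith [Real.pi_pos] : -Real.pi ≤ Real.pi)] at hmem
  exact h θ hmem h0

lemma intCosZ (n : ℤ) :
    ∫ θ in (-Real.pi)..Real.pi, Real.cos ((n : ℝ) * θ) = if n = 0 then 2 * Real.pi else 0 := by
  split_ifs with h
  · subst h; simp; ring
  · have hn : (n : ℝ) ≠ 0 := Int.cast_ne_zero.mpr h
    rw [intervalIntegral.integral_comp_mul_left Real.cos hn, integral_cos]
    have h1 : Real.sin ((n : ℝ) * Real.pi) = 0 := Real.sin_int_mul_pi n
    have h2 : Real.sin ((n : ℝ) * -Real.pi) = 0 := by rw [mul_neg, Real.sin_neg, h1, neg_zero]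
    simp [h1, h2]

lemma intSin (m : ℝ) : ∫ θ in (-Real.pi)..Real.pi, Real.sin (m * θ) = 0 := by
  rcases eq_or_ne m 0 with h | h
  · simp [h]
  · rw [intervalIntegral.integral_comp_mul_left Real.sin h, integral_sin]
    simp [mul_neg, Real.cos_neg]

lemma cos_int : ∀ n : ℝ, IntervalIntegrable (fun θ : ℝ => 2 * Real.cos (n * θ))
    volume (-Real.pi) Real.pi := fun n =>
  (continuous_const.mul (Real.continuous_cos.comp (continuous_const.mul continuous_id))).intervalIntegrable _ _

lemma sin_int' : ∀ n : ℝ, IntervalIntegrable (fun θ : ℝ => 2 * Real.sin (n * θ))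
    volume (-Real.pi) Real.pi := fun n =>
  (continuous_const.mul (Real.continuous_sin.comp (continuous_const.mul continuous_id))).intervalIntegrable _ _

lemma Hinner_cos_shape (f g : ℝ → ℝ) (m₁ m₂ : ℤ) (ε : ℝ)
    (h : ∀ θ, θ ∈ Set.Ioc (-Real.pi) Real.pi → θ ≠ 0 →
      deriv f θ * deriv g θ / Real.sin (θ / 2) ^ 2
        = 2 * Real.cos ((m₁ : ℝ) * θ) + ε * (2 * Real.cos ((m₂ : ℝ) * θ))) :
    Hinner f g = (if m₁ = 0 then 1 else 0) + ε * (if m₂ = 0 then 1 else 0) := by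
  rw [Hinner_congr f g _ h,
    intervalIntegral.integral_add (cos_int _) ((cos_int _).const_mul ε)]
  simp only [intervalIntegral.integral_const_mul, intCosZ]
  have hπ : Real.pi ≠ 0 := Real.pi_ne_zero
  split_ifs <;> field_simp <;> (try left) <;> ring

lemma Hinner_sin_shape (f g : ℝ → ℝ) (m₁ m₂ : ℝ)
    (h : ∀ θ, θ ∈ Set.Ioc (-Real.pi) Real.pi → θ ≠ 0 →
      deriv f θ * deriv g θ / Real.sin (θ / 2) ^ 2
        = 2 * Real.sin (m₁ * θ) + 2 * Real.sin (m₂ * θ)) :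
    Hinner f g = 0 := by
  rw [Hinner_congr f g _ h,
    intervalIntegral.integral_add (sin_int' _) (sin_int' _)]
  simp only [intervalIntegral.integral_const_mul, intSin]
  ring

/- ## Pointwise trigonometric identities -/

lemma keySS (x y u : ℝ) (hs : Real.sin u ≠ 0) :
    (Real.cos (x + 2 * u) - Real.cos x) * (Real.cos (y + 2 * u) - Real.cos y)
        / Real.sin u ^ 2
      = 2 * Real.cos (x - y) + (-1) * (2 * Real.cos (x + y + 2 * u)) := by
  have e1 : Real.cos (x + 2 * u)
      = Real.cos (x + u) * Real.cos u - Real.sin (x + u) * Real.sin u := by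
    rw [show x + 2 * u = x + u + u by ring]; exact Real.cos_add _ _
  have e2 : Real.cos x
      = Real.cos (x + u) * Real.cos u + Real.sin (x + u) * Real.sin u := by
    have := Real.cos_sub (x + u) u; rwa [add_sub_cancel_right] at this
  have e3 : Real.cos (y + 2 * u)
      = Real.cos (y + u) * Real.cos u - Real.sin (y + u) * Real.sin u := by
    rw [show y + 2 * u = y + u + u by ring]; exact Real.cos_add _ _
  have e4 : Real.cos y
      = Real.cos (y + u) * Real.cos u + Real.sin (y + u) * Real.sin u := by
    have := Real.cos_sub (y + u) u; rwa [add_sub_cancel_right] at this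
  have e5 : Real.cos (x - y)
      = Real.cos (x + u) * Real.cos (y + u) + Real.sin (x + u) * Real.sin (y + u) := by
    rw [show x - y = (x + u) - (y + u) by ring]; exact Real.cos_sub _ _
  have e6 : Real.cos (x + y + 2 * u)
      = Real.cos (x + u) * Real.cos (y + u) - Real.sin (x + u) * Real.sin (y + u) := by
    rw [show x + y + 2 * u = (x + u) + (y + u) by ring]; exact Real.cos_add _ _
  rw [e1, e2, e3, e4, e5, e6]
  field_simp
  ring

lemma keyCC (x y u : ℝ) (hs : Real.sin u ≠ 0) :
    (-(Real.sin (x + 2 * u) - Real.sin x)) * (-(Real.sin (y + 2 * u) - Real.sin y))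
        / Real.sin u ^ 2
      = 2 * Real.cos (x - y) + 1 * (2 * Real.cos (x + y + 2 * u)) := by
  have e1 : Real.sin (x + 2 * u)
      = Real.sin (x + u) * Real.cos u + Real.cos (x + u) * Real.sin u := by
    rw [show x + 2 * u = x + u + u by ring]; exact Real.sin_add _ _
  have e2 : Real.sin x
      = Real.sin (x + u) * Real.cos u - Real.cos (x + u) * Real.sin u := by
    have := Real.sin_sub (x + u) u; rwa [add_sub_cancel_right] at this
  have e3 : Real.sin (y + 2 * u)
      = Real.sin (y + u) * Real.cos u + Real.cos (y + u) * Real.sin u := by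
    rw [show y + 2 * u = y + u + u by ring]; exact Real.sin_add _ _
  have e4 : Real.sin y
      = Real.sin (y + u) * Real.cos u - Real.cos (y + u) * Real.sin u := by
    have := Real.sin_sub (y + u) u; rwa [add_sub_cancel_right] at this
  have e5 : Real.cos (x - y)
      = Real.cos (x + u) * Real.cos (y + u) + Real.sin (x + u) * Real.sin (y + u) := by
    rw [show x - y = (x + u) - (y + u) by ring]; exact Real.cos_sub _ _
  have e6 : Real.cos (x + y + 2 * u)
      = Real.cos (x + u) * Real.cos (y + u) - Real.sin (x + u) * Real.sin (y + u) := by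
    rw [show x + y + 2 * u = (x + u) + (y + u) by ring]; exact Real.cos_add _ _
  rw [e1, e2, e3, e4, e5, e6]
  field_simp
  ring

lemma keySC (x y u : ℝ) (hs : Real.sin u ≠ 0) :
    (Real.cos (x + 2 * u) - Real.cos x) * (-(Real.sin (y + 2 * u) - Real.sin y))
        / Real.sin u ^ 2
      = 2 * Real.sin (x + y + 2 * u) + 2 * Real.sin (x - y) := by
  have e1 : Real.cos (x + 2 * u)
      = Real.cos (x + u) * Real.cos u - Real.sin (x + u) * Real.sin u := by
    rw [show x + 2 * u = x + u + u by ring]; exact Real.cos_add _ _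
  have e2 : Real.cos x
      = Real.cos (x + u) * Real.cos u + Real.sin (x + u) * Real.sin u := by
    have := Real.cos_sub (x + u) u; rwa [add_sub_cancel_right] at this
  have e3 : Real.sin (y + 2 * u)
      = Real.sin (y + u) * Real.cos u + Real.cos (y + u) * Real.sin u := by
    rw [show y + 2 * u = y + u + u by ring]; exact Real.sin_add _ _
  have e4 : Real.sin y
      = Real.sin (y + u) * Real.cos u - Real.cos (y + u) * Real.sin u := by
    have := Real.sin_sub (y + u) u; rwa [add_sub_cancel_right] at this
  have e5 : Real.sin (x + y + 2 * u)
      = Real.sin (x + u) * Real.cos (y + u) + Real.cos (x + u) * Real.sin (y + u) := by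
    rw [show x + y + 2 * u = (x + u) + (y + u) by ring]; exact Real.sin_add _ _
  have e6 : Real.sin (x - y)
      = Real.sin (x + u) * Real.cos (y + u) - Real.cos (x + u) * Real.sin (y + u) := by
    rw [show x - y = (x + u) - (y + u) by ring]; exact Real.sin_sub _ _
  rw [e1, e2, e3, e4, e5, e6]
  field_simp
  ring

lemma sin_eq_half (θ : ℝ) :
    Real.sin θ = 2 * Real.sin (θ / 2) * Real.cos (θ / 2) := by
  have := Real.sin_two_mul (θ / 2)
  rwa [show 2 * (θ / 2) = θ by ring] at this

lemma keySC0 (x θ : ℝ) (hs : Real.sin (θ / 2) ≠ 0) :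
    (Real.cos (x + 2 * (θ / 2)) - Real.cos x) * -Real.sin θ / Real.sin (θ / 2) ^ 2
      = 2 * Real.sin (x + 2 * (θ / 2)) + 2 * Real.sin x := by
  have e1 : Real.cos (x + 2 * (θ / 2))
      = Real.cos (x + θ / 2) * Real.cos (θ / 2) - Real.sin (x + θ / 2) * Real.sin (θ / 2) := by
    rw [show x + 2 * (θ / 2) = x + θ / 2 + θ / 2 by ring]; exact Real.cos_add _ _
  have e2 : Real.cos x
      = Real.cos (x + θ / 2) * Real.cos (θ / 2) + Real.sin (x + θ / 2) * Real.sin (θ / 2) := by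
    have := Real.cos_sub (x + θ / 2) (θ / 2); rwa [add_sub_cancel_right] at this
  have e3 : Real.sin (x + 2 * (θ / 2))
      = Real.sin (x + θ / 2) * Real.cos (θ / 2) + Real.cos (x + θ / 2) * Real.sin (θ / 2) := by
    rw [show x + 2 * (θ / 2) = x + θ / 2 + θ / 2 by ring]; exact Real.sin_add _ _
  have e4 : Real.sin x
      = Real.sin (x + θ / 2) * Real.cos (θ / 2) - Real.cos (x + θ / 2) * Real.sin (θ / 2) := by
    have := Real.sin_sub (x + θ / 2) (θ / 2); rwa [add_sub_cancel_right] at this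
  rw [sin_eq_half θ, e1, e2, e3, e4]
  field_simp
  ring

lemma keyC0C (y θ : ℝ) (hs : Real.sin (θ / 2) ≠ 0) :
    -Real.sin θ * (-(Real.sin (y + 2 * (θ / 2)) - Real.sin y)) / Real.sin (θ / 2) ^ 2
      = 2 * Real.cos (y + 2 * (θ / 2)) + 1 * (2 * Real.cos y) := by
  have e1 : Real.sin (y + 2 * (θ / 2))
      = Real.sin (y + θ / 2) * Real.cos (θ / 2) + Real.cos (y + θ / 2) * Real.sin (θ / 2) := by
    rw [show y + 2 * (θ / 2) = y + θ / 2 + θ / 2 by ring]; exact Real.sin_add _ _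
  have e2 : Real.sin y
      = Real.sin (y + θ / 2) * Real.cos (θ / 2) - Real.cos (y + θ / 2) * Real.sin (θ / 2) := by
    have := Real.sin_sub (y + θ / 2) (θ / 2); rwa [add_sub_cancel_right] at this
  have e3 : Real.cos (y + 2 * (θ / 2))
      = Real.cos (y + θ / 2) * Real.cos (θ / 2) - Real.sin (y + θ / 2) * Real.sin (θ / 2) := by
    rw [show y + 2 * (θ / 2) = y + θ / 2 + θ / 2 by ring]; exact Real.cos_add _ _
  have e4 : Real.cos y
      = Real.cos (y + θ / 2) * Real.cos (θ / 2) + Real.sin (y + θ / 2) * Real.sin (θ / 2) := by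
    have := Real.cos_sub (y + θ / 2) (θ / 2); rwa [add_sub_cancel_right] at this
  rw [sin_eq_half θ, e1, e2, e3, e4]
  field_simp
  ring

lemma keyC0C0 (θ : ℝ) (hs : Real.sin (θ / 2) ≠ 0) :
    -Real.sin θ * -Real.sin θ / Real.sin (θ / 2) ^ 2
      = 2 * Real.cos (1 * θ) + 1 * (2 * Real.cos (0 * θ)) := by
  have h2 : Real.cos θ = 2 * Real.cos (θ / 2) ^ 2 - 1 := by
    have := Real.cos_two_mul (θ / 2)
    rwa [show 2 * (θ / 2) = θ by ring] at this
  rw [sin_eq_half θ, one_mul, zero_mul, Real.cos_zero, h2]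
  field_simp
  ring

/- ## The individual orthonormality relations -/

lemma case_SS (k j : ℕ) (hk : k ≠ 0) (hj : j ≠ 0) :
    Hinner (eS k) (eS j) = if k = j then 1 else 0 := by
  have h := Hinner_cos_shape (eS k) (eS j) ((k : ℤ) - j) ((k : ℤ) + j + 1) (-1) ?_
  · rw [h]
    have h2 : ¬((k : ℤ) + j + 1 = 0) := by positivity
    have h1 : ((k : ℤ) - j = 0) ↔ k = j := by omega
    simp only [h1, h2, if_false]
    split_ifs <;> ring
  · intro θ hθ h0
    have hs := sin_half_ne θ hθ h0
    rw [deriv_eS k hk, deriv_eS j hj]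
    push_cast
    rw [show ((k : ℝ) + 1) * θ = (k : ℝ) * θ + 2 * (θ / 2) by ring,
      show ((j : ℝ) + 1) * θ = (j : ℝ) * θ + 2 * (θ / 2) by ring,
      show ((k : ℝ) - j) * θ = (k : ℝ) * θ - (j : ℝ) * θ by ring,
      show ((k : ℝ) + j + 1) * θ = (k : ℝ) * θ + (j : ℝ) * θ + 2 * (θ / 2) by ring]
    exact keySS ((k : ℝ) * θ) ((j : ℝ) * θ) (θ / 2) hs

lemma case_CC (k j : ℕ) (hk : k ≠ 0) (hj : j ≠ 0) :
    Hinner (eC k) (eC j) = if k = j then 1 else 0 := by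
  have h := Hinner_cos_shape (eC k) (eC j) ((k : ℤ) - j) ((k : ℤ) + j + 1) 1 ?_
  · rw [h]
    have h2 : ¬((k : ℤ) + j + 1 = 0) := by positivity
    have h1 : ((k : ℤ) - j = 0) ↔ k = j := by omega
    simp only [h1, h2, if_false]
    split_ifs <;> ring
  · intro θ hθ h0
    have hs := sin_half_ne θ hθ h0
    rw [deriv_eC k hk, deriv_eC j hj]
    push_cast
    rw [show ((k : ℝ) + 1) * θ = (k : ℝ) * θ + 2 * (θ / 2) by ring,
      show ((j : ℝ) + 1) * θ = (j : ℝ) * θ + 2 * (θ / 2) by ring,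
      show ((k : ℝ) - j) * θ = (k : ℝ) * θ - (j : ℝ) * θ by ring,
      show ((k : ℝ) + j + 1) * θ = (k : ℝ) * θ + (j : ℝ) * θ + 2 * (θ / 2) by ring]
    exact keyCC ((k : ℝ) * θ) ((j : ℝ) * θ) (θ / 2) hs

lemma case_C0C0 : Hinner (eC 0) (eC 0) = 1 := by
  have h := Hinner_cos_shape (eC 0) (eC 0) 1 0 1 ?_
  · rw [h]; norm_num
  · intro θ hθ h0
    have hs := sin_half_ne θ hθ h0
    rw [deriv_eC0]
    push_cast
    exact keyC0C0 θ hs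

lemma case_SC (k j : ℕ) (hk : k ≠ 0) (hj : j ≠ 0) :
    Hinner (eS k) (eC j) = 0 := by
  apply Hinner_sin_shape (eS k) (eC j) ((k : ℝ) + j + 1) ((k : ℝ) - j)
  intro θ hθ h0
  have hs := sin_half_ne θ hθ h0
  rw [deriv_eS k hk, deriv_eC j hj]
  rw [show ((k : ℝ) + 1) * θ = (k : ℝ) * θ + 2 * (θ / 2) by ring,
    show ((j : ℝ) + 1) * θ = (j : ℝ) * θ + 2 * (θ / 2) by ring,
    show ((k : ℝ) + j + 1) * θ = (k : ℝ) * θ + (j : ℝ) * θ + 2 * (θ / 2) by ring,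
    show ((k : ℝ) - j) * θ = (k : ℝ) * θ - (j : ℝ) * θ by ring]
  exact keySC ((k : ℝ) * θ) ((j : ℝ) * θ) (θ / 2) hs

lemma case_SC0 (k : ℕ) (hk : k ≠ 0) : Hinner (eS k) (eC 0) = 0 := by
  apply Hinner_sin_shape (eS k) (eC 0) ((k : ℝ) + 1) (k : ℝ)
  intro θ hθ h0
  have hs := sin_half_ne θ hθ h0
  rw [deriv_eS k hk, deriv_eC0]
  rw [show ((k : ℝ) + 1) * θ = (k : ℝ) * θ + 2 * (θ / 2) by ring]
  exact keySC0 ((k : ℝ) * θ) θ hs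

lemma case_C0C (k : ℕ) (hk : k ≠ 0) : Hinner (eC 0) (eC k) = 0 := by
  have h := Hinner_cos_shape (eC 0) (eC k) ((k : ℤ) + 1) (k : ℤ) 1 ?_
  · rw [h]
    have h1 : ¬((k : ℤ) + 1 = 0) := by positivity
    have h2 : ¬((k : ℤ) = 0) := by exact_mod_cast hk
    simp [h1, h2, hk]
  · intro θ hθ h0
    have hs := sin_half_ne θ hθ h0
    rw [deriv_eC0, deriv_eC k hk]
    push_cast
    rw [show ((k : ℝ) + 1) * θ = (k : ℝ) * θ + 2 * (θ / 2) by ring]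
    exact keyC0C ((k : ℝ) * θ) θ hs

/-- The family `{e_{c,0}} ∪ {e_{s,k}}_{k≥1} ∪ {e_{c,k}}_{k≥1}` is orthonormal
with respect to the inner product of `ℋ`. -/
theorem basis_orthonormal :
    (∀ k j : ℕ, 1 ≤ k → 1 ≤ j →
        Hinner (eS k) (eS j) = if k = j then 1 else 0)
    ∧ (∀ k j : ℕ, 1 ≤ k → 1 ≤ j →
        Hinner (eC k) (eC j) = if k = j then 1 else 0)
    ∧ Hinner (eC 0) (eC 0) = 1
    ∧ (∀ k j : ℕ, 1 ≤ k → Hinner (eS k) (eC j) = 0)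
    ∧ (∀ k : ℕ, 1 ≤ k → Hinner (eC 0) (eC k) = 0) := by
  refine ⟨fun k j hk hj => case_SS k j (by omega) (by omega),
    fun k j hk hj => case_CC k j (by omega) (by omega),
    case_C0C0,
    fun k j hk => ?_,
    fun k hk => case_C0C k (by omega)⟩
  rcases Nat.eq_zero_or_pos j with hj | hj
  · subst hj; exact case_SC0 k (by omega)
  · exact case_SC k j (by omega) (by omega)
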